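/- Let Λ be a Hopf R-order in K[G] with dual order A, assume ε_A(I(A)) = λR is principal with generator λ ∈ R, and let M be a finitely generated left Λ-module that is locally free over Λ (M_𝔭 is a free Λ_𝔭-module for every prime 𝔭 of R). Then: (a) if h : M × M → Λ is a hermitian G-form — biadditive, with h(ν·m, μ·n) = ν·h(m,n)·μ̄ for all ν, μ ∈ Λ and h(m,n) = h(n,m)‾ — then q_h(m,n) := λ·ℓ(h(m,n)) takes values in R and is a G-form on M, i.e. R-bilinear, symmetric and with q_h(g·m, g·n) = q_h(m,n) for all g ∈ G; (b) if q : M × M → R is a G-form on M, then h_q(m,n) := λ⁻¹ Σ_{g∈G} q(m, g·n)·g takes values in Λ and is a hermitian G-form on M; (c) the assignments h ↦ q_h and q ↦ h_q are mutually inverse bijections between hermitian G-forms and G-forms on M; (d) h is non-degenerate (the map n ↦ (m ↦ h(m,n)) is a bijection of M onto Hom_Λ(M,Λ)) if and only if q_h is non-degenerate (the map n ↦ (m ↦ q_h(m,n)) is a bijection of M onto Hom_R(M,R)). -/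

import Mathlib

noncomputable section

open scoped BigOperators

section Core

variable (R : Type) [CommRing R] (K : Type) [Field K] [Algebra R K]
variable (G : Type) [Group G] [Fintype G] [DecidableEq G]

/-- The embedding of `K[G]` into the left factor of `K[G × G] ≅ K[G] ⊗_K K[G]`. -/
def incl1 (a : MonoidAlgebra K G) : MonoidAlgebra K (G × G) :=
  MonoidAlgebra.mapDomain (fun g => (g, (1 : G))) a

/-- The embedding of `K[G]` into the right factor of `K[G × G] ≅ K[G] ⊗_K K[G]`. -/
def incl2 (a : MonoidAlgebra K G) : MonoidAlgebra K (G × G) :=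
  MonoidAlgebra.mapDomain (fun g => ((1 : G), g)) a

/-- The comultiplication `Δ(g) = g ⊗ g` of `K[G]`, realized in `K[G × G] ≅ K[G] ⊗_K K[G]`. -/
def diagMap (u : MonoidAlgebra K G) : MonoidAlgebra K (G × G) :=
  MonoidAlgebra.mapDomain (fun g : G => (g, g)) u

/-- The antipode `S(g) = g⁻¹` of `K[G]`. -/
def antipodeMap (u : MonoidAlgebra K G) : MonoidAlgebra K G :=
  MonoidAlgebra.mapDomain (fun g : G => g⁻¹) u

/-- A Hopf `R`-order `Λ` in `K[G]`: an `R`-subalgebra containing `R[G]`, finitely generated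
as an `R`-module, spanning `K[G]` over `K`, with `Δ(Λ)` contained in the image of
`Λ ⊗_R Λ → K[G] ⊗_K K[G] ≅ K[G × G]`, `ε(Λ) ⊆ R` and `S(Λ) = Λ`. -/
structure IsHopfOrder (Λ : Subalgebra R (MonoidAlgebra K G)) : Prop where
  grp_mem : ∀ g : G, MonoidAlgebra.of K G g ∈ Λ
  fg : Λ.toSubmodule.FG
  spans : Submodule.span K (Λ : Set (MonoidAlgebra K G)) = ⊤
  comul_mem : ∀ u ∈ Λ, diagMap K G u ∈ Submodule.span R
    {x : MonoidAlgebra K (G × G) | ∃ a ∈ Λ, ∃ b ∈ Λ, x = incl1 K G a * incl2 K G b}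
  counit_mem : ∀ u ∈ Λ, (∑ g : G, u.coeff g) ∈ Set.range (algebraMap R K)
  antipode_mem : ∀ u ∈ Λ, antipodeMap K G u ∈ Λ

/-- The dual order `A` of `Λ`, inside `Map(G, K)`:
`A = {f : G → K | ∑ u_g f(g) ∈ R for all ∑ u_g g ∈ Λ}`. -/
def dualOrder (Λ : Subalgebra R (MonoidAlgebra K G)) : Set (G → K) :=
  {f | ∀ u ∈ Λ, (∑ g : G, u.coeff g * f g) ∈ Set.range (algebraMap R K)}

/-- The action of `K[G]` on `Map(G, K)`: `(u·f)(h) = ∑_g u_g f(h g)`. -/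
def actOn (u : MonoidAlgebra K G) (f : G → K) : G → K :=
  fun h => ∑ g : G, u.coeff g * f (h * g)

/-- The integrals `I(A)` of the dual order `A`:
`I(A) = {x ∈ A | a·x = a(1)·x for all a ∈ A}` (pointwise product). -/
def integrals (Λ : Subalgebra R (MonoidAlgebra K G)) : Set (G → K) :=
  {x | x ∈ dualOrder R K G Λ ∧
    ∀ a ∈ dualOrder R K G Λ, ∀ h : G, a h * x h = a 1 * x h}

/-- `ε_A(I(A)) = {x(1) : x ∈ I(A)}`. -/
def epsIntegrals (Λ : Subalgebra R (MonoidAlgebra K G)) : Set K :=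
  {y | ∃ x ∈ integrals R K G Λ, y = x 1}

end Core

section Forms

variable (R : Type) [CommRing R] (K : Type) [Field K] [Algebra R K]
variable (G : Type) [Group G] [Fintype G] [DecidableEq G]
variable (Λ : Subalgebra R (MonoidAlgebra K G))

/-- The element of `Λ` corresponding to a group element `g ∈ G ⊆ R[G] ⊆ Λ`. -/
def gAct (hΛ : IsHopfOrder R K G Λ) (g : G) : Λ :=
  ⟨MonoidAlgebra.of K G g, hΛ.grp_mem g⟩

variable (M : Type) [AddCommGroup M] [Module R M] [Module Λ M] [IsScalarTower R Λ M]

/-- `M` is free over `Λ` after localizing at the prime `𝔭` of `R` (this includes the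
generic prime `(0)`). -/
def LocallyFreeAt (𝔭 : Ideal R) : Prop :=
  ∃ (n : ℕ) (b : Fin n → M),
    (∀ m : M, ∃ s : R, s ∉ 𝔭 ∧ ∃ c : Fin n → Λ, s • m = ∑ i, c i • b i) ∧
    (∀ c : Fin n → Λ, (∑ i, c i • b i) = (0 : M) →
      ∃ s : R, s ∉ 𝔭 ∧ ∀ i, s • c i = 0)

/-- A (`K`-valued, `R`-integral) `G`-form on `M`: `R`-bilinear, symmetric, `G`-invariant and
with values in `R ⊆ K`. -/
structure IsGForm (hΛ : IsHopfOrder R K G Λ) (q : M → M → K) : Prop where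
  add_left : ∀ m₁ m₂ n, q (m₁ + m₂) n = q m₁ n + q m₂ n
  add_right : ∀ m n₁ n₂, q m (n₁ + n₂) = q m n₁ + q m n₂
  smul_left : ∀ (r : R) (m n : M), q (r • m) n = algebraMap R K r * q m n
  smul_right : ∀ (r : R) (m n : M), q m (r • n) = algebraMap R K r * q m n
  symm : ∀ m n, q m n = q n m
  g_invariant : ∀ (g : G) (m n : M),
    q (gAct R K G Λ hΛ g • m) (gAct R K G Λ hΛ g • n) = q m n
  vals : ∀ m n, q m n ∈ Set.range (algebraMap R K)

/-- A hermitian `G`-form on `M` with values in `Λ ⊆ K[G]`: biadditive, with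
`h(ν·m, μ·n) = ν·h(m,n)·S(μ)` and `h(m,n) = S(h(n,m))`. -/
structure IsHermitianGForm (hΛ : IsHopfOrder R K G Λ) (h : M → M → MonoidAlgebra K G) :
    Prop where
  add_left : ∀ m₁ m₂ n, h (m₁ + m₂) n = h m₁ n + h m₂ n
  add_right : ∀ m n₁ n₂, h m (n₁ + n₂) = h m n₁ + h m n₂
  smul_pair : ∀ (ν μ : Λ) (m n : M),
    h (ν • m) (μ • n) =
      (ν : MonoidAlgebra K G) * h m n * antipodeMap K G (μ : MonoidAlgebra K G)
  conj_symm : ∀ m n, h m n = antipodeMap K G (h n m)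
  vals : ∀ m n, h m n ∈ Λ

/-- `q_h(m,n) = λ·ℓ(h(m,n))`, where `ℓ` takes the coefficient at `1 ∈ G`. -/
def qOf (lam : R) (h : M → M → MonoidAlgebra K G) : M → M → K :=
  fun m n => algebraMap R K lam * (h m n).coeff 1

/-- `h_q(m,n) = λ⁻¹ ∑_g q(m, g·n)·g`. -/
def hOf (hΛ : IsHopfOrder R K G Λ) (lam : R) (q : M → M → K) :
    M → M → MonoidAlgebra K G :=
  fun m n => ∑ g : G,
    MonoidAlgebra.single g ((algebraMap R K lam)⁻¹ * q m (gAct R K G Λ hΛ g • n))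

/-- Non-degeneracy of a `G`-form: `n ↦ q(·,n)` is a bijection of `M` onto `Hom_R(M,R)`. -/
def QNondeg (q : M → M → K) : Prop :=
  ∀ φ : M →ₗ[R] R, ∃! n : M, ∀ m : M, q m n = algebraMap R K (φ m)

/-- Non-degeneracy of a hermitian `G`-form: `n ↦ h(·,n)` is a bijection of `M` onto
`Hom_Λ(M,Λ)`. -/
def HNondeg (h : M → M → MonoidAlgebra K G) : Prop :=
  ∀ φ : M → MonoidAlgebra K G,
    (∀ m₁ m₂, φ (m₁ + m₂) = φ m₁ + φ m₂) →
    (∀ (ν : Λ) (m : M), φ (ν • m) = (ν : MonoidAlgebra K G) * φ m) →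
    (∀ m, φ m ∈ Λ) →
    ∃! n : M, ∀ m : M, h m n = φ m

end Forms


/-!
Over a Dedekind domain the finitely generated torsion-free `R`-module `Λ` is projective, so it has
a finite dual basis whose coordinate functionals are pairings with elements of the dual order `A`.
Hence an element of `K[G]` pairing integrally with `A` lies in `Λ`. Every integral of `A` is
supported at `1`, so `ε(I(A)) = {t | t ℓ(Λ) ⊆ R}`; together with the dual basis this gives
`∑_g c(g) ∈ λR` for `c ∈ A`, and then duality gives `λ⁻¹ ∑_g c(g) g ∈ Λ`. Since a nonzero
multiple of every element of `Λ` lies in `R[G]`, an `R`-linear `f : M → K` satisfies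
`f(ν m) = ∑_g ν_g f(g m)`. Consequently `φ ↦ λ ℓ ∘ φ` and `f ↦ λ⁻¹ ∑_g f(g⁻¹ ·) g` are mutually
inverse bijections between `Hom_Λ(M, Λ)` and `Hom_R(M, R)`; applied to `h(·, n)` and `q(·, n)`
they give the correspondence between the two kinds of forms and between their non-degeneracy
conditions.
-/

open MonoidAlgebra

section Pairing

variable {K : Type} [Field K] {G : Type} [Fintype G]

def pairing (u : MonoidAlgebra K G) (c : G → K) : K := ∑ g, u.coeff g * c g

theorem pairing_single (g : G) (k : K) (c : G → K) : pairing (single g k) c = k * c g := by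
  classical
  simp [pairing, Finsupp.single_apply]

theorem pairing_piSingle [DecidableEq G] (u : MonoidAlgebra K G) (g : G) (t : K) :
    pairing u (Pi.single g t) = u.coeff g * t := by
  simp [pairing, Pi.single_apply]

theorem pairing_add_left (x y : MonoidAlgebra K G) (w : G → K) :
    pairing (x + y) w = pairing x w + pairing y w := by
  simp [pairing, add_mul, Finset.sum_add_distrib]

theorem pairing_smul_left {R : Type} [CommRing R] [Algebra R K] (r : R) (x : MonoidAlgebra K G)
    (w : G → K) : pairing (r • x) w = algebraMap R K r * pairing x w := by
  simp [pairing, Finset.mul_sum, Algebra.smul_def, mul_assoc]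

theorem pairing_diagMap (u : MonoidAlgebra K G) (w : G × G → K) :
    pairing (diagMap K G u) w = pairing u (fun g => w (g, g)) := by
  simp only [pairing, diagMap, coeff_mapDomain]
  rw [← Finsupp.sum_fintype _ (fun p k => k * w p) (by simp),
    ← Finsupp.sum_fintype _ (fun g k => k * w (g, g)) (by simp),
    Finsupp.sum_mapDomain_index (by simp) (by simp [add_mul])]

theorem coeff_sum_single (c : G → K) (g : G) :
    (∑ a, single a (c a)).coeff g = c g := by
  classical
  simp [coeff_sum, Finsupp.single_apply]

theorem eq_sum_coeff_smul_single (x : MonoidAlgebra K G) :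
    x = ∑ g, x.coeff g • single g (1 : K) := by
  ext h
  simp [coeff_sum]

end Pairing

section GroupAlgebra

variable {K : Type} [Field K] {G : Type} [Group G]

theorem coeff_antipodeMap (u : MonoidAlgebra K G) (g : G) :
    (antipodeMap K G u).coeff g = u.coeff g⁻¹ := by
  rw [← inv_inv g, antipodeMap, coeff_mapDomain, Finsupp.mapDomain_apply inv_injective, inv_inv]

theorem antipodeMap_single (g : G) (k : K) :
    antipodeMap K G (single g k) = single g⁻¹ k :=
  mapDomain_single

theorem antipodeMap_one : antipodeMap K G 1 = 1 := by
  rw [one_def, antipodeMap_single, inv_one]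

theorem antipodeMap_add (x y : MonoidAlgebra K G) :
    antipodeMap K G (x + y) = antipodeMap K G x + antipodeMap K G y :=
  mapDomain_add _ _ _

theorem antipodeMap_mul (x y : MonoidAlgebra K G) :
    antipodeMap K G (x * y) = antipodeMap K G y * antipodeMap K G x := by
  induction x using MonoidAlgebra.induction_linear with
  | zero => simp [antipodeMap]
  | add x₁ x₂ h₁ h₂ => rw [add_mul, antipodeMap_add, antipodeMap_add, h₁, h₂, mul_add]
  | single a r =>
    induction y using MonoidAlgebra.induction_linear with
    | zero => simp [antipodeMap]
    | add y₁ y₂ h₁ h₂ => rw [mul_add, antipodeMap_add, antipodeMap_add, h₁, h₂, add_mul]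
    | single b s => simp only [single_mul_single, antipodeMap_single, mul_inv_rev, mul_comm r s]

theorem coeff_one_single_mul_mul_single_inv (g : G) (x : MonoidAlgebra K G) :
    (single g 1 * x * single g⁻¹ 1).coeff 1 = x.coeff 1 := by
  simp [coeff_mul_single_apply, coeff_single_mul_apply]

theorem coe_algebraMap_subalgebra {R : Type} [CommRing R] [Algebra R K]
    {Λ : Subalgebra R (MonoidAlgebra K G)} (r : R) :
    ((algebraMap R Λ r : Λ) : MonoidAlgebra K G) = single 1 (algebraMap R K r) := by
  simp

variable [Fintype G]

theorem coeff_mul_eq_sum (x y : MonoidAlgebra K G) (g : G) :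
    (x * y).coeff g = ∑ a, x.coeff a * y.coeff (a⁻¹ * g) := by
  rw [coeff_mul_apply_left, Finsupp.sum_fintype _ _ (by simp)]

theorem pairing_incl1_mul_incl2 (x y : MonoidAlgebra K G) (c a : G → K) :
    pairing (incl1 K G x * incl2 K G y) (fun p => c p.1 * a p.2) = pairing x c * pairing y a := by
  induction x using MonoidAlgebra.induction_linear with
  | zero => simp [incl1, pairing]
  | add x₁ x₂ h₁ h₂ =>
    rw [incl1, mapDomain_add, add_mul, pairing_add_left, ← incl1, ← incl1, h₁, h₂,
      pairing_add_left, add_mul]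
  | single g k =>
    induction y using MonoidAlgebra.induction_linear with
    | zero => simp [incl2, pairing]
    | add y₁ y₂ h₁ h₂ =>
      rw [incl2, mapDomain_add, mul_add, pairing_add_left, ← incl2, ← incl2, h₁, h₂,
        pairing_add_left, mul_add]
    | single h l =>
      simp only [incl1, incl2, mapDomain_single, single_mul_single, pairing_single,
        Prod.mk_mul_mk, mul_one, one_mul]
      ring

theorem pairing_actOn (w u : MonoidAlgebra K G) (a : G → K) :
    pairing w (actOn K G u a) = pairing (w * u) a := by
  simp only [pairing, actOn, coeff_mul_eq_sum, Finset.mul_sum, Finset.sum_mul]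
  conv_rhs => rw [Finset.sum_comm]
  refine Finset.sum_congr rfl fun y _ => ?_
  exact Fintype.sum_equiv (Equiv.mulLeft y) _ _ fun x => by simp; ring

end GroupAlgebra

section HopfOrder

variable {R : Type} [CommRing R] {K : Type} [Field K] [Algebra R K]
  {G : Type} [Group G] [Fintype G] {Λ : Subalgebra R (MonoidAlgebra K G)}

theorem coe_gAct (hΛ : IsHopfOrder R K G Λ) (g : G) :
    (gAct R K G Λ hΛ g : MonoidAlgebra K G) = single g 1 :=
  rfl

theorem gAct_mul (hΛ : IsHopfOrder R K G Λ) (g g' : G) :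
    gAct R K G Λ hΛ g * gAct R K G Λ hΛ g' = gAct R K G Λ hΛ (g * g') :=
  Subtype.ext (map_mul (of K G) g g').symm

theorem gAct_one (hΛ : IsHopfOrder R K G Λ) : gAct R K G Λ hΛ 1 = 1 :=
  Subtype.ext (map_one (of K G))

theorem gAct_smul_inv_smul {M : Type} [AddCommGroup M] [Module Λ M] (hΛ : IsHopfOrder R K G Λ)
    (g : G) (m : M) : gAct R K G Λ hΛ g • gAct R K G Λ hΛ g⁻¹ • m = m := by
  rw [← mul_smul, gAct_mul, mul_inv_cancel, gAct_one, one_smul]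

theorem actOn_mem_dualOrder {u : MonoidAlgebra K G} (hu : u ∈ Λ) {a : G → K}
    (ha : a ∈ dualOrder R K G Λ) : actOn K G u a ∈ dualOrder R K G Λ := by
  intro w hw
  change pairing w (actOn K G u a) ∈ _
  rw [pairing_actOn]
  exact ha _ (mul_mem hw hu)

namespace IsHopfOrder

variable (hΛ : IsHopfOrder R K G Λ)
include hΛ

/-- Dual to the comultiplication `Δ(Λ) ⊆ Λ ⊗ Λ`. -/
theorem mul_mem_dualOrder {c a : G → K} (hc : c ∈ dualOrder R K G Λ)
    (ha : a ∈ dualOrder R K G Λ) : c * a ∈ dualOrder R K G Λ := by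
  intro u hu
  change pairing u (fun g => c g * a g) ∈ (algebraMap R K).range
  rw [← pairing_diagMap u (fun p => c p.1 * a p.2)]
  have hΔ := hΛ.comul_mem u hu
  generalize diagMap K G u = z at hΔ ⊢
  induction hΔ using Submodule.span_induction with
  | mem x hx =>
    obtain ⟨x, hx, y, hy, rfl⟩ := hx
    rw [pairing_incl1_mul_incl2]
    exact mul_mem (hc x hx) (ha y hy)
  | zero => exact ⟨0, by simp [pairing]⟩
  | add x y _ _ hx hy => rw [pairing_add_left]; exact add_mem hx hy
  | smul r x _ hx => rw [pairing_smul_left]; exact mul_mem ⟨r, rfl⟩ hx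

variable [IsFractionRing R K]

theorem exists_mul_coeff_mem :
    ∃ d : R, algebraMap R K d ≠ 0 ∧
      ∀ u ∈ Λ, ∀ g, algebraMap R K d * u.coeff g ∈ (algebraMap R K).range := by
  obtain ⟨s, hs⟩ := hΛ.fg
  obtain ⟨b, hb⟩ := IsLocalization.exist_integer_multiples_of_finite (nonZeroDivisors R)
    (fun p : s × G => (p.1 : MonoidAlgebra K G).coeff p.2)
  refine ⟨b, (IsLocalization.map_units K b).ne_zero, fun u hu => ?_⟩
  replace hu : u ∈ Submodule.span R (s : Set (MonoidAlgebra K G)) := hs ▸ hu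
  induction hu using Submodule.span_induction with
  | mem v hv =>
    intro g
    obtain ⟨y, hy⟩ := hb ⟨⟨v, hv⟩, g⟩
    exact ⟨y, by rw [hy, Algebra.smul_def]⟩
  | zero => simp
  | add v w _ _ hv hw => exact fun g => by simpa [mul_add] using add_mem (hv g) (hw g)
  | smul r v _ hv =>
    intro g
    rw [coeff_smul_apply, Algebra.smul_def, mul_left_comm]
    exact mul_mem ⟨r, rfl⟩ (hv g)

theorem linearMap_smul_eq_sum {M : Type} [AddCommGroup M] [Module R M] [Module Λ M]
    [IsScalarTower R Λ M] (L : M →ₗ[R] K) (v : Λ) (n : M) :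
    L (v • n) = ∑ g, (v : MonoidAlgebra K G).coeff g * L (gAct R K G Λ hΛ g • n) := by
  obtain ⟨d, hd, hdΛ⟩ := hΛ.exists_mul_coeff_mem
  choose r hr using hdΛ v v.2
  have hdv : d • v = ∑ g, r g • gAct R K G Λ hΛ g := by
    apply Subtype.ext
    ext x
    classical
    simp [coeff_sum, coe_gAct, Finsupp.single_apply, hr, Algebra.smul_def]
  apply mul_left_cancel₀ hd
  calc algebraMap R K d * L (v • n) = L ((d • v) • n) := by
        rw [smul_assoc, L.map_smul, Algebra.smul_def]
    _ = ∑ g, algebraMap R K (r g) * L (gAct R K G Λ hΛ g • n) := by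
        rw [hdv, Finset.sum_smul, map_sum]
        refine Finset.sum_congr rfl fun g _ => ?_
        rw [smul_assoc, L.map_smul, Algebra.smul_def]
    _ = algebraMap R K d * ∑ g, (v : MonoidAlgebra K G).coeff g * L (gAct R K G Λ hΛ g • n) := by
        simp [hr, Finset.mul_sum, mul_assoc]

variable [IsDedekindDomain R]

theorem projective : Module.Projective R Λ :=
  have : Module.Finite R Λ := Module.Finite.iff_fg.mpr hΛ.fg
  have : Module.FinitePresentation R Λ := Module.finitePresentation_of_finite R Λ
  Module.Flat.projective_of_finitePresentation

theorem exists_dualBasis :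
    ∃ (s : Finset Λ) (a : Λ → G → K), (∀ v, a v ∈ dualOrder R K G Λ) ∧
      ∀ g, single g (1 : K) = ∑ v ∈ s, a v g • (v : MonoidAlgebra K G) := by
  classical
  obtain ⟨σ, hσ⟩ := Module.projective_def'.mp hΛ.projective
  let f : Λ → Λ →ₗ[R] K := fun v => Algebra.linearMap R K ∘ₗ Finsupp.lapply v ∘ₗ σ
  refine ⟨Finset.univ.biUnion fun g => (σ (gAct R K G Λ hΛ g)).support,
    fun v g => f v (gAct R K G Λ hΛ g), fun v u hu => ⟨σ ⟨u, hu⟩ v, ?_⟩, fun g => ?_⟩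
  · simpa [f] using hΛ.linearMap_smul_eq_sum (f v) ⟨u, hu⟩ 1
  · have h := congrArg Subtype.val (LinearMap.congr_fun hσ (gAct R K G Λ hΛ g))
    simp only [LinearMap.comp_apply, Finsupp.linearCombination_apply, Finsupp.sum,
      LinearMap.id_apply, AddSubmonoidClass.coe_finsetSum] at h
    rw [← coe_gAct hΛ, ← h]
    have hsub : (σ (gAct R K G Λ hΛ g)).support ⊆
        Finset.univ.biUnion fun g => (σ (gAct R K G Λ hΛ g)).support :=
      Finset.subset_biUnion_of_mem (fun g => (σ (gAct R K G Λ hΛ g)).support) (Finset.mem_univ g)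
    refine (Finset.sum_subset hsub fun v _ hv => ?_).trans (Finset.sum_congr rfl fun v _ => ?_)
    · simp [Finsupp.notMem_support_iff.mp hv]
    · simp [f, algebraMap_smul]

end IsHopfOrder

end HopfOrder

section Integrals

variable {R : Type} [CommRing R] {K : Type} [Field K] [Algebra R K] [IsFractionRing R K]
  {G : Type} [Group G] [Fintype G] {Λ : Subalgebra R (MonoidAlgebra K G)}

namespace IsHopfOrder

variable (hΛ : IsHopfOrder R K G Λ)
include hΛ

theorem mem_epsIntegrals_iff (t : K) :
    t ∈ epsIntegrals R K G Λ ↔ ∀ u ∈ Λ, t * u.coeff 1 ∈ (algebraMap R K).range := by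
  classical
  constructor
  · rintro ⟨x, ⟨hxA, hxI⟩, rfl⟩ u hu
    obtain ⟨d, hd, hdΛ⟩ := hΛ.exists_mul_coeff_mem
    have hsupp : ∀ g ≠ 1, x g = 0 := by
      intro g hg
      have hδ : Pi.single g (algebraMap R K d) ∈ dualOrder R K G Λ := fun v hv => by
        change pairing v _ ∈ _
        rw [pairing_piSingle, mul_comm]
        exact hdΛ v hv g
      simpa [hg, hd] using hxI _ hδ g
    have hux : pairing u x = u.coeff 1 * x 1 :=
      Finset.sum_eq_single 1 (fun g _ hg => by rw [hsupp g hg, mul_zero]) (by simp)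
    rw [mul_comm, ← hux]
    exact hxA u hu
  · intro ht
    refine ⟨Pi.single 1 t, ⟨fun u hu => ?_, fun a _ g => ?_⟩, by simp⟩
    · change pairing u _ ∈ _
      rw [pairing_piSingle, mul_comm]
      exact ht u hu
    · by_cases hg : g = 1
      · rw [hg]
      · simp [hg]

section Dedekind

variable [IsDedekindDomain R]

theorem mem_of_forall_pairing_mem {x : MonoidAlgebra K G}
    (hx : ∀ c ∈ dualOrder R K G Λ, pairing x c ∈ (algebraMap R K).range) : x ∈ Λ := by
  obtain ⟨s, a, haA, hbasis⟩ := hΛ.exists_dualBasis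
  have hx_eq : x = ∑ v ∈ s, pairing x (a v) • (v : MonoidAlgebra K G) := by
    conv_lhs => rw [eq_sum_coeff_smul_single x]
    simp_rw [hbasis, Finset.smul_sum, smul_smul]
    rw [Finset.sum_comm]
    simp [pairing, Finset.sum_smul]
  rw [hx_eq]
  refine sum_mem fun v _ => ?_
  obtain ⟨r, hr⟩ := hx _ (haA v)
  rw [← hr, algebraMap_smul]
  exact Λ.smul_mem v.2 r

theorem sum_mem_epsIntegrals {c : G → K} (hc : c ∈ dualOrder R K G Λ) :
    ∑ g, c g ∈ epsIntegrals R K G Λ := by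
  classical
  refine (hΛ.mem_epsIntegrals_iff _).mpr fun u hu => ?_
  obtain ⟨s, a, haA, hbasis⟩ := hΛ.exists_dualBasis
  have hδ : ∀ g y, ∑ v ∈ s, a v g * (v : MonoidAlgebra K G).coeff y = if g = y then 1 else 0 := by
    intro g y
    simpa [coeff_sum, Finsupp.single_apply, eq_comm] using
      (congrArg (fun z : MonoidAlgebra K G => z.coeff y) (hbasis g)).symm
  have key : ∑ v ∈ s, pairing v (c * actOn K G u (a v)) = (∑ g, c g) * u.coeff 1 := by
    calc ∑ v ∈ s, pairing v (c * actOn K G u (a v))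
        = ∑ y, c y * ∑ x, u.coeff x * ∑ v ∈ s, a v (y * x) * (v : MonoidAlgebra K G).coeff y := by
          simp only [pairing, actOn, Pi.mul_apply, Finset.mul_sum]
          rw [Finset.sum_comm]
          refine Finset.sum_congr rfl fun y _ => ?_
          rw [Finset.sum_comm]
          exact Finset.sum_congr rfl fun x _ => Finset.sum_congr rfl fun v _ => by ring
      _ = (∑ g, c g) * u.coeff 1 := by
          simp [hδ, Finset.sum_mul]
  rw [← key]
  exact sum_mem fun v _ => hΛ.mul_mem_dualOrder hc (actOn_mem_dualOrder hu (haA v)) v v.2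

end Dedekind

variable {lam : R}
  (hlam : epsIntegrals R K G Λ = {y : K | ∃ r : R, y = algebraMap R K r * algebraMap R K lam})
include hlam

theorem lam_mul_coeff_one_mem {u : MonoidAlgebra K G} (hu : u ∈ Λ) :
    algebraMap R K lam * u.coeff 1 ∈ (algebraMap R K).range :=
  (hΛ.mem_epsIntegrals_iff _).mp (hlam ▸ ⟨1, by rw [map_one, one_mul]⟩) u hu

theorem algebraMap_lam_ne_zero : algebraMap R K lam ≠ 0 := by
  obtain ⟨d, hd, hdΛ⟩ := hΛ.exists_mul_coeff_mem
  have hd_mem := (hΛ.mem_epsIntegrals_iff _).mpr fun u hu => hdΛ u hu 1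
  rw [hlam] at hd_mem
  obtain ⟨r, hr⟩ := hd_mem
  exact fun h0 => hd (by rw [hr, h0, mul_zero])

theorem sum_single_lam_inv_mul_mem [IsDedekindDomain R] {c : G → K}
    (hc : c ∈ dualOrder R K G Λ) :
    ∑ g, single g ((algebraMap R K lam)⁻¹ * c g) ∈ Λ := by
  refine hΛ.mem_of_forall_pairing_mem fun a ha => ?_
  have hca := hΛ.sum_mem_epsIntegrals (hΛ.mul_mem_dualOrder hc ha)
  rw [hlam] at hca
  obtain ⟨r, hr⟩ := hca
  refine ⟨r, ?_⟩
  have hsum : pairing (∑ g, single g ((algebraMap R K lam)⁻¹ * c g)) a =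
      (algebraMap R K lam)⁻¹ * ∑ g, (c * a) g := by
    simp only [pairing, coeff_sum_single, Finset.mul_sum, Pi.mul_apply, mul_assoc]
  rw [hsum, hr, mul_comm (algebraMap R K r), inv_mul_cancel_left₀ (hΛ.algebraMap_lam_ne_zero hlam)]

end IsHopfOrder

end Integrals

section Functionals

variable {R : Type} [CommRing R] {K : Type} [Field K] [Algebra R K]
  {G : Type} [Group G] {Λ : Subalgebra R (MonoidAlgebra K G)} {M : Type} [AddCommGroup M]
  [Module Λ M]

/-- The elements of `Hom_Λ(M, Λ)`. -/
structure IsLambdaHom (Λ : Subalgebra R (MonoidAlgebra K G)) [Module Λ M]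
    (φ : M → MonoidAlgebra K G) : Prop where
  map_add : ∀ m₁ m₂, φ (m₁ + m₂) = φ m₁ + φ m₂
  map_smul : ∀ (ν : Λ) (m : M), φ (ν • m) = (ν : MonoidAlgebra K G) * φ m
  mem : ∀ m, φ m ∈ Λ

theorem hNondeg_iff {h : M → M → MonoidAlgebra K G} :
    HNondeg R K G Λ M h ↔ ∀ φ, IsLambdaHom Λ φ → ∃! n : M, ∀ m : M, h m n = φ m :=
  ⟨fun H φ hφ => H φ hφ.map_add hφ.map_smul hφ.mem, fun H φ h₁ h₂ h₃ => H φ ⟨h₁, h₂, h₃⟩⟩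

def IsLambdaHom.lamCoeffOne [Module R M] [IsScalarTower R Λ M] {φ : M → MonoidAlgebra K G}
    (hφ : IsLambdaHom Λ φ) (lam : R) : M →ₗ[R] K where
  toFun m := algebraMap R K lam * (φ m).coeff 1
  map_add' m₁ m₂ := by simp [hφ.map_add, mul_add]
  map_smul' r m := by
    rw [← algebraMap_smul Λ r m, hφ.map_smul, coe_algebraMap_subalgebra, coeff_single_mul_apply,
      inv_one, one_mul, RingHom.id_apply, Algebra.smul_def, mul_left_comm]

theorem exists_linearMap_algebraMap_apply_eq [IsFractionRing R K] [Module R M]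
    (f : M →ₗ[R] K) (hf : ∀ m, f m ∈ (algebraMap R K).range) :
    ∃ ψ : M →ₗ[R] R, ∀ m, algebraMap R K (ψ m) = f m := by
  choose ψ hψ using hf
  have hinj := IsFractionRing.injective R K
  refine ⟨{ toFun := ψ, map_add' := fun m₁ m₂ => hinj ?_, map_smul' := fun r m => hinj ?_ }, hψ⟩
  · simp [hψ]
  · simp [hψ, Algebra.smul_def]

variable [Fintype G]

/-- The inverse of `φ ↦ λ ℓ ∘ φ`, from `Hom_R(M, R)` to `Hom_Λ(M, Λ)`. -/
def liftFunctional (hΛ : IsHopfOrder R K G Λ) (lam : R) (f : M → K) : M → MonoidAlgebra K G :=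
  fun m => ∑ g, single g ((algebraMap R K lam)⁻¹ * f (gAct R K G Λ hΛ g⁻¹ • m))

variable (hΛ : IsHopfOrder R K G Λ) {lam : R}

theorem coeff_liftFunctional (f : M → K) (m : M) (g : G) :
    (liftFunctional hΛ lam f m).coeff g =
      (algebraMap R K lam)⁻¹ * f (gAct R K G Λ hΛ g⁻¹ • m) :=
  coeff_sum_single _ g

theorem lam_mul_coeff_one_liftFunctional (hlam : algebraMap R K lam ≠ 0) (f : M → K) (m : M) :
    algebraMap R K lam * (liftFunctional hΛ lam f m).coeff 1 = f m := by
  rw [coeff_liftFunctional, inv_one, gAct_one, one_smul, mul_inv_cancel_left₀ hlam]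

theorem liftFunctional_lam_mul_coeff_one (hlam : algebraMap R K lam ≠ 0)
    {φ : M → MonoidAlgebra K G}
    (hφ : ∀ g m, φ (gAct R K G Λ hΛ g • m) = single g 1 * φ m) :
    liftFunctional hΛ lam (fun m => algebraMap R K lam * (φ m).coeff 1) = φ := by
  ext m g
  rw [coeff_liftFunctional, inv_mul_cancel_left₀ hlam, hφ, coeff_single_mul_apply, inv_inv,
    mul_one, one_mul]

theorem eq_of_lam_mul_coeff_one_eq (hlam : algebraMap R K lam ≠ 0)
    {φ₁ φ₂ : M → MonoidAlgebra K G}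
    (hφ₁ : ∀ g m, φ₁ (gAct R K G Λ hΛ g • m) = single g 1 * φ₁ m)
    (hφ₂ : ∀ g m, φ₂ (gAct R K G Λ hΛ g • m) = single g 1 * φ₂ m)
    (h : ∀ m, algebraMap R K lam * (φ₁ m).coeff 1 = algebraMap R K lam * (φ₂ m).coeff 1) :
    φ₁ = φ₂ := by
  rw [← liftFunctional_lam_mul_coeff_one hΛ hlam hφ₁,
    ← liftFunctional_lam_mul_coeff_one hΛ hlam hφ₂]
  simp only [h]

variable [Module R M]

theorem liftFunctional_add (f : M →ₗ[R] K) (m₁ m₂ : M) :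
    liftFunctional hΛ lam f (m₁ + m₂) =
      liftFunctional hΛ lam f m₁ + liftFunctional hΛ lam f m₂ := by
  ext g
  simp only [coeff_add, Finsupp.add_apply, coeff_liftFunctional, smul_add, map_add, mul_add]

variable [IsScalarTower R Λ M] [IsFractionRing R K]

theorem liftFunctional_smul (f : M →ₗ[R] K) (ν : Λ) (m : M) :
    liftFunctional hΛ lam f (ν • m) = (ν : MonoidAlgebra K G) * liftFunctional hΛ lam f m := by
  ext g
  rw [coeff_liftFunctional, coeff_mul_eq_sum, ← mul_smul, hΛ.linearMap_smul_eq_sum f,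
    Finset.mul_sum]
  refine Fintype.sum_equiv (Equiv.mulLeft g) _ _ fun y => ?_
  simp [coe_gAct, coeff_liftFunctional, coeff_single_mul_apply]
  ring

variable [IsDedekindDomain R]
  (hlam : epsIntegrals R K G Λ = {y : K | ∃ r : R, y = algebraMap R K r * algebraMap R K lam})
include hlam

theorem liftFunctional_mem (f : M →ₗ[R] K) (hf : ∀ m, f m ∈ (algebraMap R K).range) (m : M) :
    liftFunctional hΛ lam f m ∈ Λ := by
  refine hΛ.sum_single_lam_inv_mul_mem hlam fun u hu => ?_
  have hS : antipodeMap K G u ∈ Λ := hΛ.antipode_mem u hu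
  have hpair : ∑ g, u.coeff g * f (gAct R K G Λ hΛ g⁻¹ • m) =
      f ((⟨antipodeMap K G u, hS⟩ : Λ) • m) := by
    rw [hΛ.linearMap_smul_eq_sum f]
    exact Fintype.sum_equiv (Equiv.inv G) _ _ fun g => by simp [coeff_antipodeMap]
  rw [hpair]
  exact hf _

theorem isLambdaHom_liftFunctional (f : M →ₗ[R] K) (hf : ∀ m, f m ∈ (algebraMap R K).range) :
    IsLambdaHom Λ (liftFunctional hΛ lam f) :=
  ⟨liftFunctional_add hΛ f, liftFunctional_smul hΛ f, liftFunctional_mem hΛ hlam f hf⟩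

end Functionals

theorem forall_existsUnique_iff_of_correspondence {α β N : Type*} {P : α → Prop}
    {E : α → β → Prop} {A : N → α → Prop} {B : N → β → Prop}
    (hα : ∀ a, P a → ∃ b, E a b) (hβ : ∀ b, ∃ a, P a ∧ E a b)
    (hAB : ∀ n a b, P a → E a b → (A n a ↔ B n b)) :
    (∀ a, P a → ∃! n, A n a) ↔ ∀ b, ∃! n, B n b := by
  constructor
  · intro H b
    obtain ⟨a, ha, hab⟩ := hβ b
    exact (existsUnique_congr fun n => hAB n a b ha hab).mp (H a ha)
  · intro H a ha
    obtain ⟨b, hab⟩ := hα a ha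
    exact (existsUnique_congr fun n => hAB n a b ha hab).mpr (H b)

section Forms

variable {R : Type} [CommRing R] {K : Type} [Field K] [Algebra R K]
  {G : Type} [Group G] [Fintype G] {Λ : Subalgebra R (MonoidAlgebra K G)}
  {M : Type} [AddCommGroup M] [Module Λ M] {hΛ : IsHopfOrder R K G Λ} {lam : R}

theorem coeff_hOf (q : M → M → K) (m n : M) (g : G) :
    (hOf R K G Λ M hΛ lam q m n).coeff g =
      (algebraMap R K lam)⁻¹ * q m (gAct R K G Λ hΛ g • n) :=
  coeff_sum_single _ g

theorem qOf_hOf (q : M → M → K) (hlam : algebraMap R K lam ≠ 0) :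
    qOf R K G M lam (hOf R K G Λ M hΛ lam q) = q := by
  ext m n
  rw [qOf, coeff_hOf, gAct_one, one_smul, mul_inv_cancel_left₀ hlam]

namespace IsHermitianGForm

variable {h : M → M → MonoidAlgebra K G}

theorem smul_left (hh : IsHermitianGForm R K G Λ M hΛ h) (ν : Λ) (m n : M) :
    h (ν • m) n = (ν : MonoidAlgebra K G) * h m n := by
  simpa [antipodeMap_one] using hh.smul_pair ν 1 m n

theorem smul_right (hh : IsHermitianGForm R K G Λ M hΛ h) (μ : Λ) (m n : M) :
    h m (μ • n) = h m n * antipodeMap K G (μ : MonoidAlgebra K G) := by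
  simpa using hh.smul_pair 1 μ m n

theorem of_smul_left (add_left : ∀ m₁ m₂ n, h (m₁ + m₂) n = h m₁ n + h m₂ n)
    (add_right : ∀ m n₁ n₂, h m (n₁ + n₂) = h m n₁ + h m n₂)
    (smul_left : ∀ (ν : Λ) m n, h (ν • m) n = (ν : MonoidAlgebra K G) * h m n)
    (conj_symm : ∀ m n, h m n = antipodeMap K G (h n m)) (vals : ∀ m n, h m n ∈ Λ) :
    IsHermitianGForm R K G Λ M hΛ h where
  add_left := add_left
  add_right := add_right
  smul_pair ν μ m n := by
    rw [smul_left, conj_symm m, smul_left, antipodeMap_mul, ← conj_symm, mul_assoc]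
  conj_symm := conj_symm
  vals := vals

theorem hOf_qOf (hh : IsHermitianGForm R K G Λ M hΛ h)
    (hlam : algebraMap R K lam ≠ 0) :
    hOf R K G Λ M hΛ lam (qOf R K G M lam h) = h := by
  ext m n g
  rw [coeff_hOf, qOf, inv_mul_cancel_left₀ hlam, hh.smul_right, coe_gAct,
    antipodeMap_single, coeff_mul_single_apply, one_mul, inv_inv, mul_one]

variable [Module R M] [IsScalarTower R Λ M] [IsFractionRing R K]

theorem qOf_isGForm (hh : IsHermitianGForm R K G Λ M hΛ h)
    (hlam : epsIntegrals R K G Λ = {y : K | ∃ r : R, y = algebraMap R K r * algebraMap R K lam}) :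
    IsGForm R K G Λ M hΛ (qOf R K G M lam h) where
  add_left m₁ m₂ n := by simp [qOf, hh.add_left, mul_add]
  add_right m n₁ n₂ := by simp [qOf, hh.add_right, mul_add]
  smul_left r m n := by
    rw [qOf, qOf, ← algebraMap_smul Λ r m, hh.smul_left, coe_algebraMap_subalgebra,
      coeff_single_mul_apply, inv_one, one_mul, mul_left_comm]
  smul_right r m n := by
    rw [qOf, qOf, ← algebraMap_smul Λ r n, hh.smul_right, coe_algebraMap_subalgebra,
      antipodeMap_single, coeff_mul_single_apply, inv_one, inv_one, mul_one]
    ring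
  symm m n := by rw [qOf, qOf, hh.conj_symm m n, coeff_antipodeMap, inv_one]
  g_invariant g m n := by
    rw [qOf, qOf, hh.smul_pair, coe_gAct, antipodeMap_single, coeff_one_single_mul_mul_single_inv]
  vals m n := hΛ.lam_mul_coeff_one_mem hlam (hh.vals m n)

theorem hNondeg_iff_qNondeg [IsDedekindDomain R] (hh : IsHermitianGForm R K G Λ M hΛ h)
    (hlam : epsIntegrals R K G Λ = {y : K | ∃ r : R, y = algebraMap R K r * algebraMap R K lam}) :
    HNondeg R K G Λ M h ↔ QNondeg R K M (qOf R K G M lam h) := by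
  have hlam₀ := hΛ.algebraMap_lam_ne_zero hlam
  rw [hNondeg_iff, QNondeg]
  refine forall_existsUnique_iff_of_correspondence
    (E := fun φ ψ => ∀ m, algebraMap R K (ψ m) = algebraMap R K lam * (φ m).coeff 1)
    (fun φ hφ => ?_) (fun ψ => ?_) (fun n φ ψ hφ hφψ => ?_)
  · exact exists_linearMap_algebraMap_apply_eq (hφ.lamCoeffOne lam)
      fun m => hΛ.lam_mul_coeff_one_mem hlam (hφ.mem m)
  · let f := Algebra.linearMap R K ∘ₗ ψ
    exact ⟨liftFunctional hΛ lam f, isLambdaHom_liftFunctional hΛ hlam f fun m => ⟨ψ m, rfl⟩,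
      fun m => (lam_mul_coeff_one_liftFunctional hΛ hlam₀ f m).symm⟩
  · simp only [hφψ, qOf]
    refine ⟨fun hn m => by rw [hn], fun hn => congrFun ?_⟩
    exact eq_of_lam_mul_coeff_one_eq hΛ hlam₀ (fun g m => hh.smul_left _ m n)
      (fun g m => hφ.map_smul _ m) hn

end IsHermitianGForm

namespace IsGForm

variable [Module R M] {q : M → M → K}

def linearMapLeft (hq : IsGForm R K G Λ M hΛ q) (n : M) : M →ₗ[R] K where
  toFun m := q m n
  map_add' m₁ m₂ := hq.add_left m₁ m₂ n
  map_smul' r m := by rw [hq.smul_left, RingHom.id_apply, Algebra.smul_def]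

theorem hOf_eq_liftFunctional (hq : IsGForm R K G Λ M hΛ q) (m n : M) :
    hOf R K G Λ M hΛ lam q m n = liftFunctional hΛ lam (hq.linearMapLeft n) m := by
  ext g
  rw [coeff_hOf, coeff_liftFunctional]
  change _ = _ * q _ n
  rw [← hq.g_invariant g (gAct R K G Λ hΛ g⁻¹ • m), gAct_smul_inv_smul]

theorem hOf_isHermitianGForm [IsScalarTower R Λ M] [IsFractionRing R K] [IsDedekindDomain R]
    (hq : IsGForm R K G Λ M hΛ q)
    (hlam : epsIntegrals R K G Λ = {y : K | ∃ r : R, y = algebraMap R K r * algebraMap R K lam}) :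
    IsHermitianGForm R K G Λ M hΛ (hOf R K G Λ M hΛ lam q) := by
  refine .of_smul_left (fun m₁ m₂ n => ?_) (fun m n₁ n₂ => ?_) (fun ν m n => ?_)
    (fun m n => ?_) (fun m n => ?_)
  · simp only [hq.hOf_eq_liftFunctional, liftFunctional_add]
  · ext g
    simp [coeff_hOf, smul_add, hq.add_right, mul_add]
  · simp only [hq.hOf_eq_liftFunctional, liftFunctional_smul]
  · ext g
    rw [coeff_antipodeMap, coeff_hOf, coeff_hOf, hq.symm n,
      ← hq.g_invariant g (gAct R K G Λ hΛ g⁻¹ • m), gAct_smul_inv_smul]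
  · rw [hq.hOf_eq_liftFunctional]
    exact liftFunctional_mem hΛ hlam _ (fun m => hq.vals m n) m

end IsGForm

end Forms

theorem statement3_general
    (R : Type) [CommRing R] [IsDedekindDomain R]
    (K : Type) [Field K] [Algebra R K] [IsFractionRing R K]
    (G : Type) [Group G] [Fintype G]
    (Λ : Subalgebra R (MonoidAlgebra K G)) (hΛ : IsHopfOrder R K G Λ)
    (lam : R)
    (hlam : epsIntegrals R K G Λ =
      {y : K | ∃ r : R, y = algebraMap R K r * algebraMap R K lam})
    (M : Type) [AddCommGroup M] [Module R M] [Module Λ M] [IsScalarTower R Λ M] :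
    (∀ h : M → M → MonoidAlgebra K G, IsHermitianGForm R K G Λ M hΛ h →
      IsGForm R K G Λ M hΛ (qOf R K G M lam h)) ∧
    (∀ q : M → M → K, IsGForm R K G Λ M hΛ q →
      IsHermitianGForm R K G Λ M hΛ (hOf R K G Λ M hΛ lam q)) ∧
    (∀ q : M → M → K, IsGForm R K G Λ M hΛ q →
      qOf R K G M lam (hOf R K G Λ M hΛ lam q) = q) ∧
    (∀ h : M → M → MonoidAlgebra K G, IsHermitianGForm R K G Λ M hΛ h →
      hOf R K G Λ M hΛ lam (qOf R K G M lam h) = h) ∧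
    (∀ h : M → M → MonoidAlgebra K G, IsHermitianGForm R K G Λ M hΛ h →
      (HNondeg R K G Λ M h ↔ QNondeg R K M (qOf R K G M lam h))) :=
  ⟨fun _ hh => hh.qOf_isGForm hlam,
    fun _ hq => hq.hOf_isHermitianGForm hlam,
    fun q _ => qOf_hOf q (hΛ.algebraMap_lam_ne_zero hlam),
    fun _ hh => hh.hOf_qOf (hΛ.algebraMap_lam_ne_zero hlam),
    fun _ hh => hh.hNondeg_iff_qNondeg hlam⟩

/-- Let `Λ` be a Hopf `R`-order in `K[G]` with dual order `A`, with
`ε_A(I(A)) = λR` principal, and let `M` be a finitely generated locally free left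
`Λ`-module.  Then: (a) if `h` is a hermitian `G`-form then `q_h` is a `G`-form;
(b) if `q` is a `G`-form then `h_q` is a hermitian `G`-form; (c) `h ↦ q_h` and `q ↦ h_q`
are mutually inverse; (d) `h` is non-degenerate iff `q_h` is non-degenerate. -/
theorem statement3
    (R : Type) [CommRing R] [IsDomain R] [IsDedekindDomain R]
    (K : Type) [Field K] [Algebra R K] [IsFractionRing R K]
    (G : Type) [Group G] [Fintype G] [DecidableEq G]
    (Λ : Subalgebra R (MonoidAlgebra K G)) (hΛ : IsHopfOrder R K G Λ)
    (lam : R)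
    (hlam : epsIntegrals R K G Λ =
      {y : K | ∃ r : R, y = algebraMap R K r * algebraMap R K lam})
    (M : Type) [AddCommGroup M] [Module R M] [Module Λ M] [IsScalarTower R Λ M]
    [Module.Finite Λ M]
    (hloc : ∀ 𝔭 : Ideal R, 𝔭.IsPrime → LocallyFreeAt R K G Λ M 𝔭) :
    (∀ h : M → M → MonoidAlgebra K G, IsHermitianGForm R K G Λ M hΛ h →
      IsGForm R K G Λ M hΛ (qOf R K G M lam h)) ∧
    (∀ q : M → M → K, IsGForm R K G Λ M hΛ q →
      IsHermitianGForm R K G Λ M hΛ (hOf R K G Λ M hΛ lam q)) ∧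
    (∀ q : M → M → K, IsGForm R K G Λ M hΛ q →
      qOf R K G M lam (hOf R K G Λ M hΛ lam q) = q) ∧
    (∀ h : M → M → MonoidAlgebra K G, IsHermitianGForm R K G Λ M hΛ h →
      hOf R K G Λ M hΛ lam (qOf R K G M lam h) = h) ∧
    (∀ h : M → M → MonoidAlgebra K G, IsHermitianGForm R K G Λ M hΛ h →
      (HNondeg R K G Λ M h ↔ QNondeg R K M (qOf R K G M lam h))) :=
  statement3_general R K G Λ hΛ lam hlam M
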